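/- Let f be the Fibonacci sequence with f_0 = f_1 = 1, and let (p_k) be bounded strictly positive. The space c_0(F̂,p), equipped with the paranorm g(x) = sup_k |(F̂x)_k|^{p_k/M} (M = max{1, sup p_k}), is complete: every Cauchy sequence in (c_0(F̂,p), d) with d(x,z) = g(x−z) converges to an element of c_0(F̂,p). -/

import Mathlib

/-!
`F̂` has the explicit right inverse `xseq`, so `c₀(F̂, p)` is the preimage of `c₀(p)` under `F̂`
and `g = G ∘ F̂`, where `G y = sup_k |y_k|^{q_k}` with `q_k = p_k / M ∈ (0, 1]`. A `g`-Cauchy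
sequence `u` therefore gives a `G`-Cauchy sequence `F̂ uᵢ`, which is Cauchy in every coordinate
because `t ↦ t^{q_k}` is strictly increasing. Its coordinatewise limit `y` is a uniform limit, and
subadditivity of `t ↦ t^{q_k}` (as `q_k ≤ 1`) keeps `y` in `c₀(p)`; then `xseq y` is the limit of `u`.
-/

open Filter Topology

def fibo : ℕ → ℕ
  | 0 => 1
  | 1 => 1
  | n + 2 => fibo (n + 1) + fibo n

noncomputable def Fhat (x : ℕ → ℝ) : ℕ → ℝ
  | 0 => (fibo 0 : ℝ) / fibo 1 * x 0
  | k + 1 => (fibo (k + 1) : ℝ) / fibo (k + 2) * x (k + 1)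
      - (fibo (k + 2) : ℝ) / fibo (k + 1) * x k

noncomputable def xseq (y : ℕ → ℝ) (k : ℕ) : ℝ :=
  ∑ j ∈ Finset.range (k + 1), ((fibo (k + 1) : ℝ) ^ 2 / ((fibo j : ℝ) * fibo (j + 1))) * y j

lemma fibo_pos : ∀ n, 0 < fibo n
  | 0 => Nat.one_pos
  | 1 => Nat.one_pos
  | n + 2 => Nat.add_pos_left (fibo_pos (n + 1)) _

lemma fibo_cast_ne_zero (n : ℕ) : (fibo n : ℝ) ≠ 0 := by
  exact_mod_cast (fibo_pos n).ne'

lemma Fhat_sub (x z : ℕ → ℝ) : Fhat (x - z) = Fhat x - Fhat z := by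
  ext k
  cases k <;> simp only [Fhat, Pi.sub_apply] <;> ring

lemma Fhat_xseq (y : ℕ → ℝ) : Fhat (xseq y) = y := by
  ext k
  cases k with
  | zero => simp [Fhat, xseq, fibo]
  | succ k =>
    have hk₁ := fibo_cast_ne_zero (k + 1)
    have hk₂ := fibo_cast_ne_zero (k + 2)
    have hcancel : ∀ j ∈ Finset.range (k + 1),
        (fibo (k + 1) : ℝ) / fibo (k + 2) * ((fibo (k + 2) : ℝ) ^ 2 / (fibo j * fibo (j + 1)) * y j)
          - (fibo (k + 2) : ℝ) / fibo (k + 1) * ((fibo (k + 1) : ℝ) ^ 2 / (fibo j * fibo (j + 1)) * y j)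
          = 0 := by
      intro j _
      have := fibo_cast_ne_zero j
      have := fibo_cast_ne_zero (j + 1)
      field_simp
      ring
    change (fibo (k + 1) : ℝ) / fibo (k + 2) * xseq y (k + 1)
      - (fibo (k + 2) : ℝ) / fibo (k + 1) * xseq y k = y (k + 1)
    rw [xseq, xseq, Finset.sum_range_succ (n := k + 1), mul_add, Finset.mul_sum, Finset.mul_sum,
      add_sub_right_comm, ← Finset.sum_sub_distrib, Finset.sum_eq_zero hcancel, zero_add]
    field_simp

lemma abs_sub_rpow_le {t : ℝ} (a b : ℝ) (ht₀ : 0 ≤ t) (ht₁ : t ≤ 1) :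
    |a - b| ^ t ≤ |a| ^ t + |b| ^ t :=
  calc |a - b| ^ t ≤ (|a| + |b|) ^ t := Real.rpow_le_rpow (abs_nonneg _) (abs_sub _ _) ht₀
    _ ≤ |a| ^ t + |b| ^ t := Real.rpow_add_le_add_rpow (abs_nonneg _) (abs_nonneg _) ht₀ ht₁

def c0Pow (q : ℕ → ℝ) : Set (ℕ → ℝ) :=
  {y | Tendsto (fun k => |y k| ^ q k) atTop (𝓝 0)}

noncomputable def powSup (q : ℕ → ℝ) (y : ℕ → ℝ) : ℝ :=
  ⨆ k, |y k| ^ q k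

lemma mem_c0Pow_div_iff {p : ℕ → ℝ} {M : ℝ} (hM : 0 < M) (y : ℕ → ℝ) :
    y ∈ c0Pow (fun k => p k / M) ↔ y ∈ c0Pow p := by
  constructor
  · intro h
    have := h.rpow_const (p := M) (Or.inr hM.le)
    rw [Real.zero_rpow hM.ne'] at this
    refine this.congr fun k => ?_
    rw [← Real.rpow_mul (abs_nonneg _), div_mul_cancel₀ _ hM.ne']
  · intro h
    have := h.rpow_const (p := M⁻¹) (Or.inr (inv_nonneg.2 hM.le))
    rw [Real.zero_rpow (inv_ne_zero hM.ne')] at this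
    exact this.congr fun k => by simp only [div_eq_mul_inv, Real.rpow_mul (abs_nonneg _)]

section Paranorm

variable {q : ℕ → ℝ}

lemma powSup_nonneg (y : ℕ → ℝ) : 0 ≤ powSup q y :=
  Real.iSup_nonneg fun _ => Real.rpow_nonneg (abs_nonneg _) _

lemma powSup_le {y : ℕ → ℝ} {ε : ℝ} (h : ∀ k, |y k| ^ q k ≤ ε) : powSup q y ≤ ε :=
  ciSup_le h

lemma abs_rpow_le_powSup {y : ℕ → ℝ} (hy : y ∈ c0Pow q) (k : ℕ) : |y k| ^ q k ≤ powSup q y :=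
  le_ciSup (Tendsto.bddAbove_range hy) k

lemma tendsto_powSup_sub_of_uniform {v : ℕ → ℕ → ℝ} {y : ℕ → ℝ}
    (h : ∀ ε > 0, ∃ N, ∀ i ≥ N, ∀ k, |v i k - y k| ^ q k ≤ ε) :
    Tendsto (fun i => powSup q (v i - y)) atTop (𝓝 0) := by
  refine Metric.tendsto_atTop.2 fun ε hε => ?_
  obtain ⟨N, hN⟩ := h (ε / 2) (by positivity)
  refine ⟨N, fun i hi => ?_⟩
  have hle : powSup q (v i - y) ≤ ε / 2 := powSup_le (hN i hi)
  rw [Real.dist_eq, sub_zero, abs_of_nonneg (powSup_nonneg _)]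
  linarith

variable (hq₀ : ∀ k, 0 ≤ q k) (hq₁ : ∀ k, q k ≤ 1)
include hq₀ hq₁

lemma sub_mem_c0Pow {y z : ℕ → ℝ} (hy : y ∈ c0Pow q) (hz : z ∈ c0Pow q) : y - z ∈ c0Pow q := by
  refine squeeze_zero (fun k => Real.rpow_nonneg (abs_nonneg _) _)
    (fun k => abs_sub_rpow_le (y k) (z k) (hq₀ k) (hq₁ k)) ?_
  simpa using hy.add hz

lemma mem_c0Pow_of_uniform_approx {y : ℕ → ℝ}
    (h : ∀ ε > 0, ∃ w ∈ c0Pow q, ∀ k, |w k - y k| ^ q k ≤ ε) : y ∈ c0Pow q := by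
  refine Metric.tendsto_atTop.2 fun ε hε => ?_
  obtain ⟨w, hw, hwy⟩ := h (ε / 3) (by positivity)
  obtain ⟨K, hK⟩ := eventually_atTop.1 (hw.eventually_lt_const (by positivity : 0 < ε / 3))
  refine ⟨K, fun k hk => ?_⟩
  have hyk : |y k| ^ q k ≤ |y k - w k| ^ q k + |w k| ^ q k :=
    by simpa using abs_sub_rpow_le (y k - w k) (-w k) (hq₀ k) (hq₁ k)
  rw [abs_sub_comm] at hyk
  rw [Real.dist_eq, sub_zero, abs_of_nonneg (Real.rpow_nonneg (abs_nonneg _) _)]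
  linarith [hwy k, hK k hk]

end Paranorm

lemma exists_uniform_limit_of_uniform_cauchy {q : ℕ → ℝ} (hq : ∀ k, 0 < q k) (v : ℕ → ℕ → ℝ)
    (hv : ∀ ε > 0, ∃ N, ∀ i ≥ N, ∀ j ≥ N, ∀ k, |v i k - v j k| ^ q k < ε) :
    ∃ y : ℕ → ℝ, ∀ ε > 0, ∃ N, ∀ i ≥ N, ∀ k, |v i k - y k| ^ q k ≤ ε := by
  have hcoord : ∀ k, CauchySeq fun i => v i k := by
    intro k
    refine Metric.cauchySeq_iff.2 fun ε hε => ?_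
    obtain ⟨N, hN⟩ := hv (ε ^ q k) (Real.rpow_pos_of_pos hε _)
    refine ⟨N, fun i hi j hj => ?_⟩
    rw [Real.dist_eq, ← Real.rpow_lt_rpow_iff (abs_nonneg _) hε.le (hq k)]
    exact hN i hi j hj k
  choose y hy using fun k => cauchySeq_tendsto_of_complete (hcoord k)
  refine ⟨y, fun ε hε => ?_⟩
  obtain ⟨N, hN⟩ := hv ε hε
  refine ⟨N, fun i hi k => ?_⟩
  have hlim : Tendsto (fun j => |v i k - v j k| ^ q k) atTop (𝓝 (|v i k - y k| ^ q k)) :=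
    ((tendsto_const_nhds.sub (hy k)).abs).rpow_const (Or.inr (hq k).le)
  exact le_of_tendsto hlim (eventually_atTop.2 ⟨N, fun j hj => (hN i hi j hj k).le⟩)

theorem c0_Fhat_complete (p : ℕ → ℝ) (H : ℝ) (hp : ∀ k, 0 < p k) (hH : ∀ k, p k ≤ H)
    (M : ℝ) (hM : M = max 1 H)
    (g : (ℕ → ℝ) → ℝ) (hg : ∀ x, g x = ⨆ k, |Fhat x k| ^ (p k / M))
    (S : Set (ℕ → ℝ))
    (hS : S = {x | Tendsto (fun n => |Fhat x n| ^ p n) atTop (𝓝 0)})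
    (u : ℕ → (ℕ → ℝ)) (hu : ∀ i, u i ∈ S)
    (hcauchy : ∀ ε > 0, ∃ N, ∀ i ≥ N, ∀ j ≥ N, g (u i - u j) < ε) :
    ∃ x ∈ S, Tendsto (fun i => g (u i - x)) atTop (𝓝 0) := by
  set q : ℕ → ℝ := fun k => p k / M
  have hM₀ : 0 < M := hM ▸ lt_max_of_lt_left one_pos
  have hq₀ : ∀ k, 0 < q k := fun k => div_pos (hp k) hM₀
  have hq₁ : ∀ k, q k ≤ 1 := fun k => (div_le_one hM₀).2 ((hH k).trans (hM ▸ le_max_right 1 H))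
  have hmem : ∀ x, x ∈ S ↔ Fhat x ∈ c0Pow q := fun x => by
    rw [hS, mem_c0Pow_div_iff hM₀]; rfl
  have hFu : ∀ i, Fhat (u i) ∈ c0Pow q := fun i => (hmem _).1 (hu i)
  obtain ⟨y, hy⟩ := exists_uniform_limit_of_uniform_cauchy hq₀ (fun i => Fhat (u i)) fun ε hε => by
    obtain ⟨N, hN⟩ := hcauchy ε hε
    refine ⟨N, fun i hi j hj k => ?_⟩
    have hdiff : Fhat (u i - u j) ∈ c0Pow q :=
      Fhat_sub _ _ ▸ sub_mem_c0Pow (fun k => (hq₀ k).le) hq₁ (hFu i) (hFu j)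
    calc |Fhat (u i) k - Fhat (u j) k| ^ q k = |Fhat (u i - u j) k| ^ q k := by rw [Fhat_sub]; rfl
      _ ≤ g (u i - u j) := hg _ ▸ abs_rpow_le_powSup hdiff k
      _ < ε := hN i hi j hj
  have hyc : y ∈ c0Pow q := mem_c0Pow_of_uniform_approx (fun k => (hq₀ k).le) hq₁ fun ε hε =>
    let ⟨N, hN⟩ := hy ε hε; ⟨_, hFu N, hN N le_rfl⟩
  refine ⟨xseq y, (hmem _).2 ((Fhat_xseq y).symm ▸ hyc), ?_⟩
  have hconv : Tendsto (fun i => powSup q (Fhat (u i) - Fhat (xseq y))) atTop (𝓝 0) := by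
    rw [Fhat_xseq]
    exact tendsto_powSup_sub_of_uniform hy
  exact hconv.congr fun i => by rw [hg, ← Fhat_sub]; rfl
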